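/- Let d ≥ 1 and let P be a nonconstant polynomial in d variables with complex coefficients, of total degree m, with principal part P_m (the homogeneous component of P of degree m). Then for every linear subspace V ⊆ ℝ^d: σ⁰_P(V) ≤ σ⁰_{P_m}(V). -/

import Mathlib

/-!
Write `m` for the total degree of `P ≠ 0`. Splitting `P` into homogeneous components gives
`P(λx) = λ^m P_m(x) + O(λ^(m-1))` uniformly for `x` in a compact set and `λ ≥ 1`. Hence, at the
rescaled point `(λξ, λt)`, both `P̃_V` and `P̃` of `P` are `λ^m` times those of `P_m` at `(ξ, t)` up
to an additive `O(λ^(m-1))`, and `P̃_{P_m}(ξ, t) > 0`; so the ratio defining `σ⁰_P` at `(λξ, λt)`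
tends to the ratio of `P_m` at `(ξ, t)` as `λ → ∞`, and `λt > 1` eventually.
-/

open MvPolynomial Filter Finset

noncomputable section

/-- Evaluation of a complex-coefficient polynomial at a real point. -/
def evalR {d : ℕ} (P : MvPolynomial (Fin d) ℂ) (ξ : EuclideanSpace ℝ (Fin d)) : ℂ :=
  eval (fun i => (ξ i : ℂ)) P

/-- `P̃_V(ξ,t) = sup {|P(ξ+η)| : η ∈ V, |η| ≤ t}`. -/
def PtildeV {d : ℕ} (P : MvPolynomial (Fin d) ℂ) (V : Submodule ℝ (EuclideanSpace ℝ (Fin d)))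
    (ξ : EuclideanSpace ℝ (Fin d)) (t : ℝ) : ℝ :=
  sSup {r : ℝ | ∃ η ∈ V, ‖η‖ ≤ t ∧ r = ‖evalR P (ξ + η)‖}

/-- `P̃(ξ,t) = P̃_{ℝ^d}(ξ,t)`. -/
def Ptilde {d : ℕ} (P : MvPolynomial (Fin d) ℂ) (ξ : EuclideanSpace ℝ (Fin d)) (t : ℝ) : ℝ :=
  PtildeV P ⊤ ξ t

/-- `σ⁰_P(V)`. -/
def sigma0 {d : ℕ} (P : MvPolynomial (Fin d) ℂ) (V : Submodule ℝ (EuclideanSpace ℝ (Fin d))) : ℝ :=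
  sInf {r : ℝ | ∃ t > (1:ℝ), ∃ ξ, r = PtildeV P V ξ t / Ptilde P ξ t}

/-- `σ_P(V)`. -/
def sigma {d : ℕ} (P : MvPolynomial (Fin d) ℂ) (V : Submodule ℝ (EuclideanSpace ℝ (Fin d))) : ℝ :=
  sInf {r : ℝ | ∃ t > (1:ℝ), r = liminf (fun ξ => PtildeV P V ξ t / Ptilde P ξ t)
    (Bornology.cobounded (EuclideanSpace ℝ (Fin d)))}

/-- Multi-index partial derivative `∂^α P`. -/
def pd {d : ℕ} (α : Fin d → ℕ) (P : MvPolynomial (Fin d) ℂ) : MvPolynomial (Fin d) ℂ :=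
  ((List.ofFn fun i : Fin d =>
      ((pderiv i).toLinearMap ^ α i : Module.End ℂ (MvPolynomial (Fin d) ℂ))).prod) P

/-- The finset of multi-indices `α` with `k ≤ |α| ≤ m`. -/
def midx (d m k : ℕ) : Finset (Fin d → ℕ) :=
  (Fintype.piFinset fun _ : Fin d => Finset.range (m+1)).filter fun α => k ≤ ∑ i, α i ∧ ∑ i, α i ≤ m

/-- `⟨∇P(ξ), x⟩ = Σ_j ∂_j P(ξ) x_j`. -/
def gradPair {d : ℕ} (P : MvPolynomial (Fin d) ℂ) (ξ x : EuclideanSpace ℝ (Fin d)) : ℂ :=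
  ∑ j, evalR (pderiv j P) ξ * (x j : ℂ)

/-- `|∇P(ξ)|`, the Euclidean norm of the gradient. -/
def gradNorm {d : ℕ} (P : MvPolynomial (Fin d) ℂ) (ξ : EuclideanSpace ℝ (Fin d)) : ℝ :=
  Real.sqrt (∑ j, ‖evalR (pderiv j P) ξ‖ ^ 2)

open Topology

namespace MvPolynomial.IsHomogeneous

lemma eval_smul {σ R : Type*} [CommSemiring R] {φ : MvPolynomial σ R} {n : ℕ}
    (hφ : φ.IsHomogeneous n) (c : R) (x : σ → R) :
    eval (c • x) φ = c ^ n * eval x φ := by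
  simp only [eval_eq, mul_sum, Pi.smul_apply, smul_eq_mul, mul_pow, prod_mul_distrib,
    prod_pow_eq_pow_sum]
  refine sum_congr rfl fun s hs => ?_
  have hs' : s.degree = n := by
    rw [Finsupp.degree_eq_weight_one]; exact hφ (mem_support_iff.mp hs)
  rw [← hs', Finsupp.degree_apply]
  ring

end MvPolynomial.IsHomogeneous

lemma MvPolynomial.homogeneousComponent_totalDegree_ne_zero {σ R : Type*} [CommSemiring R]
    {φ : MvPolynomial σ R} (hφ : φ ≠ 0) : homogeneousComponent φ.totalDegree φ ≠ 0 := by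
  obtain ⟨s, hs, hsd⟩ := exists_mem_eq_sup φ.support (support_nonempty.mpr hφ)
    fun s => s.sum fun _ e => e
  rw [← support_nonempty, support_homogeneousComponent]
  exact ⟨s, mem_filter.mpr ⟨hs, hsd.symm⟩⟩

section evalR

variable {d : ℕ}

lemma continuous_evalR (Q : MvPolynomial (Fin d) ℂ) : Continuous (evalR Q) :=
  continuous_eval Q |>.comp <| continuous_pi fun i =>
    Complex.continuous_ofReal.comp (PiLp.continuous_apply 2 _ i)

lemma evalR_sum {ι : Type*} (s : Finset ι) (f : ι → MvPolynomial (Fin d) ℂ)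
    (x : EuclideanSpace ℝ (Fin d)) : evalR (∑ j ∈ s, f j) x = ∑ j ∈ s, evalR (f j) x :=
  map_sum _ _ _

lemma evalR_smul_of_isHomogeneous {Q : MvPolynomial (Fin d) ℂ} {n : ℕ}
    (hQ : Q.IsHomogeneous n) (c : ℝ) (x : EuclideanSpace ℝ (Fin d)) :
    evalR Q (c • x) = (c : ℂ) ^ n * evalR Q x := by
  have : (fun i => ((c • x) i : ℂ)) = (c : ℂ) • fun i => (x i : ℂ) := by
    ext i; simp
  rw [evalR, this, hQ.eval_smul]; rfl

lemma eq_zero_of_isOpen_of_evalR_eq_zero {Q : MvPolynomial (Fin d) ℂ}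
    {U : Set (EuclideanSpace ℝ (Fin d))} (hU : IsOpen U) (hne : U.Nonempty)
    (hQ : ∀ x ∈ U, evalR Q x = 0) : Q = 0 := by
  obtain ⟨ξ, hξ⟩ := hne
  have hU' : IsOpen (WithLp.toLp 2 ⁻¹' U : Set (Fin d → ℝ)) :=
    hU.preimage (PiLp.continuous_toLp 2 _)
  obtain ⟨ε, hε, hball⟩ := Metric.isOpen_iff.mp hU' (WithLp.ofLp ξ) (by simpa using hξ)
  -- the sup-norm ball `ball ξ ε ⊆ U` is a box with infinite sides
  refine funext_set (fun i => Complex.ofReal '' Metric.ball (ξ i) ε)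
    (fun i => by
      rw [Real.ball_eq_Ioo]
      exact (Set.Ioo_infinite (by linarith)).image Complex.ofReal_injective.injOn)
    fun z hz => ?_
  choose y hy hyz using fun i => hz i (Set.mem_univ i)
  have hyU : WithLp.toLp 2 y ∈ U := hball (by rw [ball_pi _ hε]; exact fun i _ => hy i)
  rw [map_zero, ← hQ _ hyU, evalR]
  congr
  ext i
  exact (hyz i).symm

lemma norm_evalR_smul_sub_principal_le (P : MvPolynomial (Fin d) ℂ) {lam : ℝ} (hlam : 1 ≤ lam)
    (x : EuclideanSpace ℝ (Fin d)) :
    ‖evalR P (lam • x) - (lam : ℂ) ^ P.totalDegree * evalR (homogeneousComponent P.totalDegree P) x‖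
      ≤ lam ^ P.totalDegree *
          (lam⁻¹ * ∑ j ∈ range P.totalDegree, ‖evalR (homogeneousComponent j P) x‖) := by
  set m := P.totalDegree
  have hlam0 : 0 < lam := by linarith
  have hexpand : evalR P (lam • x)
      = ∑ j ∈ range (m + 1), (lam : ℂ) ^ j * evalR (homogeneousComponent j P) x := by
    conv_lhs => rw [← sum_homogeneousComponent P]
    rw [evalR_sum]
    exact sum_congr rfl fun j _ =>
      evalR_smul_of_isHomogeneous (homogeneousComponent_isHomogeneous j P) lam x
  rw [hexpand, sum_range_succ, add_sub_cancel_right, mul_sum, mul_sum]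
  refine (norm_sum_le _ _).trans (sum_le_sum fun j hj => ?_)
  have hpow : lam ^ j ≤ lam ^ m * lam⁻¹ := by
    rw [le_mul_inv_iff₀ hlam0, ← pow_succ]
    exact pow_le_pow_right₀ hlam (mem_range.mp hj)
  rw [norm_mul, norm_pow, Complex.norm_real, Real.norm_of_nonneg hlam0.le, ← mul_assoc]
  exact mul_le_mul_of_nonneg_right hpow (norm_nonneg _)

end evalR

section PtildeV

variable {d : ℕ} {P Q : MvPolynomial (Fin d) ℂ} {V : Submodule ℝ (EuclideanSpace ℝ (Fin d))}
  {ξ η : EuclideanSpace ℝ (Fin d)} {t : ℝ}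

lemma bddAbove_norm_evalR_image (Q : MvPolynomial (Fin d) ℂ)
    (V : Submodule ℝ (EuclideanSpace ℝ (Fin d))) (ξ : EuclideanSpace ℝ (Fin d)) (t : ℝ) :
    BddAbove {r : ℝ | ∃ η ∈ V, ‖η‖ ≤ t ∧ r = ‖evalR Q (ξ + η)‖} := by
  obtain ⟨C, hC⟩ :=
    (isCompact_closedBall (0 : EuclideanSpace ℝ (Fin d)) t).exists_bound_of_continuousOn
      ((continuous_evalR Q).comp (continuous_const_add ξ)).continuousOn
  refine ⟨C, ?_⟩
  rintro r ⟨η, -, hηt, rfl⟩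
  exact hC η (mem_closedBall_zero_iff.mpr hηt)

lemma norm_evalR_le_ptildeV (hη : η ∈ V) (hηt : ‖η‖ ≤ t) :
    ‖evalR Q (ξ + η)‖ ≤ PtildeV Q V ξ t :=
  le_csSup (bddAbove_norm_evalR_image Q V ξ t) ⟨η, hη, hηt, rfl⟩

lemma ptildeV_nonneg : 0 ≤ PtildeV Q V ξ t :=
  Real.sSup_nonneg fun _ ⟨_, _, _, hr⟩ => hr ▸ norm_nonneg _

lemma ptildeV_le {M : ℝ} (hM : 0 ≤ M) (h : ∀ η ∈ V, ‖η‖ ≤ t → ‖evalR Q (ξ + η)‖ ≤ M) :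
    PtildeV Q V ξ t ≤ M :=
  Real.sSup_le (by rintro r ⟨η, hη, hηt, rfl⟩; exact h η hη hηt) hM

lemma ptilde_pos (hQ : Q ≠ 0) (ht : 0 < t) : 0 < Ptilde Q ξ t := by
  by_contra! h
  refine hQ (eq_zero_of_isOpen_of_evalR_eq_zero Metric.isOpen_ball ⟨ξ, Metric.mem_ball_self ht⟩
    fun x hx => norm_le_zero_iff.mp ?_)
  have hx' : ‖x - ξ‖ ≤ t := (mem_ball_iff_norm.mp hx).le
  simpa using (norm_evalR_le_ptildeV (Q := Q) (ξ := ξ) Submodule.mem_top hx').trans h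

lemma ptildeV_smul_le {lam c ε : ℝ} (hlam : 0 < lam) (hc : 0 ≤ c) (hε : 0 ≤ ε)
    (h : ∀ η ∈ V, ‖η‖ ≤ t → ‖evalR P (lam • (ξ + η)) - c * evalR Q (ξ + η)‖ ≤ c * ε) :
    PtildeV P V (lam • ξ) (lam * t) ≤ c * (PtildeV Q V ξ t + ε) := by
  refine ptildeV_le (mul_nonneg hc (add_nonneg ptildeV_nonneg hε)) fun η hη hηt => ?_
  have hη' : lam⁻¹ • η ∈ V := V.smul_mem _ hη
  have hηt' : ‖lam⁻¹ • η‖ ≤ t := by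
    rwa [norm_smul, norm_inv, Real.norm_of_nonneg hlam.le, inv_mul_le_iff₀ hlam]
  have hx : lam • ξ + η = lam • (ξ + lam⁻¹ • η) := by rw [smul_add, smul_inv_smul₀ hlam.ne']
  calc ‖evalR P (lam • ξ + η)‖
      ≤ ‖(c : ℂ) * evalR Q (ξ + lam⁻¹ • η)‖ + c * ε := by
        rw [hx]; exact (norm_le_norm_add_norm_sub' _ _).trans (by gcongr; exact h _ hη' hηt')
    _ ≤ c * (PtildeV Q V ξ t + ε) := by
        rw [norm_mul, Complex.norm_real, Real.norm_of_nonneg hc, mul_add]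
        gcongr
        exact norm_evalR_le_ptildeV hη' hηt'

lemma mul_ptildeV_sub_le {lam c ε : ℝ} (hlam : 0 < lam) (hc : 0 < c) (hε : 0 ≤ ε)
    (h : ∀ η ∈ V, ‖η‖ ≤ t → ‖evalR P (lam • (ξ + η)) - c * evalR Q (ξ + η)‖ ≤ c * ε) :
    c * (PtildeV Q V ξ t - ε) ≤ PtildeV P V (lam • ξ) (lam * t) := by
  suffices PtildeV Q V ξ t ≤ (PtildeV P V (lam • ξ) (lam * t) + c * ε) / c by
    rw [le_div_iff₀' hc] at this; linarith
  refine ptildeV_le (div_nonneg (add_nonneg ptildeV_nonneg (mul_nonneg hc.le hε)) hc.le)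
    fun η hη hηt => ?_
  have hlamη : ‖lam • η‖ ≤ lam * t := by
    rw [norm_smul, Real.norm_of_nonneg hlam.le]; gcongr
  rw [le_div_iff₀' hc]
  calc c * ‖evalR Q (ξ + η)‖ = ‖(c : ℂ) * evalR Q (ξ + η)‖ := by
        rw [norm_mul, Complex.norm_real, Real.norm_of_nonneg hc.le]
    _ ≤ ‖evalR P (lam • (ξ + η))‖ + c * ε :=
        (norm_le_norm_add_norm_sub _ _).trans (by gcongr; exact h η hη hηt)
    _ ≤ PtildeV P V (lam • ξ) (lam * t) + c * ε := by
        rw [smul_add]; gcongr; exact norm_evalR_le_ptildeV (V.smul_mem _ hη) hlamη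

end PtildeV

section sigma0

variable {d : ℕ}

lemma sigma0_le_div (P : MvPolynomial (Fin d) ℂ) (V : Submodule ℝ (EuclideanSpace ℝ (Fin d)))
    {ξ : EuclideanSpace ℝ (Fin d)} {t : ℝ} (ht : 1 < t) :
    sigma0 P V ≤ PtildeV P V ξ t / Ptilde P ξ t :=
  csInf_le ⟨0, by rintro r ⟨t, -, ξ, rfl⟩; exact div_nonneg ptildeV_nonneg ptildeV_nonneg⟩
    ⟨t, ht, ξ, rfl⟩

lemma sigma0_le_div_principal {P : MvPolynomial (Fin d) ℂ} (hP : P ≠ 0)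
    (V : Submodule ℝ (EuclideanSpace ℝ (Fin d))) (ξ : EuclideanSpace ℝ (Fin d)) {t : ℝ}
    (ht : 0 < t) :
    sigma0 P V ≤ PtildeV (homogeneousComponent P.totalDegree P) V ξ t
      / Ptilde (homogeneousComponent P.totalDegree P) ξ t := by
  set m := P.totalDegree
  set Q := homogeneousComponent m P
  set a := PtildeV Q V ξ t
  set b := Ptilde Q ξ t
  have hb : 0 < b := ptilde_pos (homogeneousComponent_totalDegree_ne_zero hP) ht
  obtain ⟨M, hM⟩ := (isCompact_closedBall ξ t).bddAbove_image
    (f := fun x => ∑ j ∈ range m, ‖evalR (homogeneousComponent j P) x‖)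
    (continuous_finsetSum _ fun j _ => (continuous_evalR _).norm).continuousOn
  have hM0 : 0 ≤ M := (sum_nonneg fun j _ => norm_nonneg _).trans
    (hM ⟨ξ, Metric.mem_closedBall_self ht.le, rfl⟩)
  have hclose : ∀ lam : ℝ, 1 ≤ lam → ∀ η : EuclideanSpace ℝ (Fin d), ‖η‖ ≤ t →
      ‖evalR P (lam • (ξ + η)) - ((lam ^ m : ℝ) : ℂ) * evalR Q (ξ + η)‖
        ≤ lam ^ m * (lam⁻¹ * M) := by
    intro lam hlam η hηt
    have hx : ξ + η ∈ Metric.closedBall ξ t := by simpa [dist_eq_norm] using hηt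
    push_cast
    refine (norm_evalR_smul_sub_principal_le P hlam _).trans ?_
    gcongr
    exact hM ⟨_, hx, rfl⟩
  have hεlim : Tendsto (fun lam : ℝ => lam⁻¹ * M) atTop (𝓝 0) := by
    simpa using tendsto_inv_atTop_zero.mul_const M
  have hden : Tendsto (fun lam : ℝ => b - lam⁻¹ * M) atTop (𝓝 b) := by
    simpa using (tendsto_const_nhds (x := b)).sub hεlim
  have hnum : Tendsto (fun lam : ℝ => a + lam⁻¹ * M) atTop (𝓝 a) := by
    simpa using (tendsto_const_nhds (x := a)).add hεlim
  refine ge_of_tendsto (hnum.div hden hb.ne') ?_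
  filter_upwards [eventually_ge_atTop 1, eventually_gt_atTop t⁻¹,
    hden.eventually_const_lt hb] with lam hlam hlamt hpos
  have hlam0 : 0 < lam := by linarith
  have hc : 0 < lam ^ m := by positivity
  have hε : 0 ≤ lam⁻¹ * M := by positivity
  have hlamt' : 1 < lam * t := by rw [inv_lt_iff_one_lt_mul₀ ht] at hlamt; linarith
  calc sigma0 P V ≤ PtildeV P V (lam • ξ) (lam * t) / Ptilde P (lam • ξ) (lam * t) :=
        sigma0_le_div P V hlamt'
    _ ≤ lam ^ m * (a + lam⁻¹ * M) / (lam ^ m * (b - lam⁻¹ * M)) :=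
        div_le_div₀ (mul_nonneg hc.le (add_nonneg ptildeV_nonneg hε))
          (ptildeV_smul_le hlam0 hc.le hε fun η _ => hclose lam hlam η)
          (mul_pos hc hpos) (mul_ptildeV_sub_le hlam0 hc hε fun η _ => hclose lam hlam η)
    _ = (a + lam⁻¹ * M) / (b - lam⁻¹ * M) := mul_div_mul_left _ _ hc.ne'

end sigma0

theorem statement7_general {d m : ℕ} (P : MvPolynomial (Fin d) ℂ)
    (hdeg : P.totalDegree = m) (V : Submodule ℝ (EuclideanSpace ℝ (Fin d))) :
    sigma0 P V ≤ sigma0 (homogeneousComponent m P) V := by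
  rcases eq_or_ne P 0 with rfl | hP
  · rw [map_zero]
  subst hdeg
  exact le_csInf ⟨_, 2, one_lt_two, 0, rfl⟩ fun r ⟨t, ht, ξ, hr⟩ =>
    hr ▸ sigma0_le_div_principal hP V ξ (by linarith)

/-- For a nonconstant polynomial `P` of total degree `m` with principal part `P_m`,
`σ⁰_P(V) ≤ σ⁰_{P_m}(V)` for every subspace `V`. -/
theorem statement7 {d m : ℕ} (hd : 1 ≤ d) (hm : 1 ≤ m) (P : MvPolynomial (Fin d) ℂ)
    (hdeg : P.totalDegree = m) (V : Submodule ℝ (EuclideanSpace ℝ (Fin d))) :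
    sigma0 P V ≤ sigma0 (homogeneousComponent m P) V :=
  statement7_general P hdeg V
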